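/- arXiv:1203.5465 — 7 statements merged into one kernel-verified Lean document; each statement's English description precedes it below -/
import Mathlib

section
/- Let a > 0, k₁ = π/(2a), χ₁(u) = cos(k₁u), and for an integer k ≥ 0 set η_k = ∫_{−a}^{a} u^k (χ₁′(u)² − k₁² χ₁(u)²) du. If k ≥ 2 is even, then η_k = (1/2) · (k! / (2k₁)^{k−1}) · Σ_{l=1}^{k/2} (−1)^{k/2−l} π^{2l−1}/(2l−1)!. -/
/-!
Put `b = 2 k₁ = π / a`. Since `χ₁′² − k₁² χ₁² = −k₁² cos (b u)`, we get `η_k = −k₁² I_k`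
with `I_k = ∫_{−a}^{a} u^k cos (b u) du`. Two integrations by parts give the reduction formula
`I_{k+2} = −2 (k+2) a^{k+1} / b² − (k+2)(k+1) / b² · I_k` for even `k`, the boundary terms
being simple because `b a = π`, so `sin (± b a) = 0` and `cos (± b a) = −1`. Together with
`I_0 = 0` this gives the closed form by induction on `k / 2`; the alternating sign comes from
the minus sign in front of `I_k`.
-/

open Real Finset
open scoped Nat

theorem sum_Icc_one_succ_neg_one_pow_mul {R : Type*} [CommRing R] (f : ℕ → R) (m : ℕ) :
    ∑ l ∈ Icc 1 (m + 1), (-1) ^ (m + 1 - l) * f l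
      = f (m + 1) - ∑ l ∈ Icc 1 m, (-1) ^ (m - l) * f l := by
  rw [sum_Icc_succ_top (by omega), Nat.sub_self, pow_zero, one_mul, add_comm, sub_eq_add_neg,
    ← sum_neg_distrib]
  congr 1
  refine sum_congr rfl fun l hl => ?_
  rw [show m + 1 - l = m - l + 1 by grind, pow_succ]
  ring

section PowMulCos

variable {b : ℝ}

theorem hasDerivAt_pow_mul_sin_add_pow_mul_cos (hb : b ≠ 0) (n : ℕ) (x : ℝ) :
    HasDerivAt
      (fun u => u ^ (n + 2) * sin (b * u) / b + (n + 2) * u ^ (n + 1) * cos (b * u) / b ^ 2)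
      (x ^ (n + 2) * cos (b * x) + (n + 2) * (n + 1) / b ^ 2 * (x ^ n * cos (b * x))) x := by
  have hlin : HasDerivAt (fun u => b * u) b x := by simpa using (hasDerivAt_id x).const_mul b
  have hsin := ((hasDerivAt_pow (n + 2) x).fun_mul hlin.sin).div_const b
  have hcos :=
    (((hasDerivAt_pow (n + 1) x).const_mul ((n : ℝ) + 2)).fun_mul hlin.cos).div_const (b ^ 2)
  refine (hsin.fun_add hcos).congr_deriv ?_
  simp only [Nat.add_sub_cancel]
  push_cast
  field_simp
  ring

theorem intervalIntegrable_pow_mul_cos (n : ℕ) (x y : ℝ) :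
    IntervalIntegrable (fun u => u ^ n * cos (b * u)) MeasureTheory.volume x y :=
  (by fun_prop : Continuous fun u => u ^ n * cos (b * u)).intervalIntegrable x y

theorem integral_pow_add_two_mul_cos (hb : b ≠ 0) (n : ℕ) (x y : ℝ) :
    ∫ u in x..y, u ^ (n + 2) * cos (b * u) =
      (y ^ (n + 2) * sin (b * y) / b + (n + 2) * y ^ (n + 1) * cos (b * y) / b ^ 2)
        - (x ^ (n + 2) * sin (b * x) / b + (n + 2) * x ^ (n + 1) * cos (b * x) / b ^ 2)
        - (n + 2) * (n + 1) / b ^ 2 * ∫ u in x..y, u ^ n * cos (b * u) := by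
  rw [eq_sub_iff_add_eq, ← intervalIntegral.integral_const_mul,
    ← intervalIntegral.integral_add (intervalIntegrable_pow_mul_cos _ x y)
      ((intervalIntegrable_pow_mul_cos n x y).const_mul _)]
  exact intervalIntegral.integral_eq_sub_of_hasDerivAt
    (fun u _ => hasDerivAt_pow_mul_sin_add_pow_mul_cos hb n u)
    ((intervalIntegrable_pow_mul_cos _ x y).add
      ((intervalIntegrable_pow_mul_cos n x y).const_mul _))

theorem integral_pow_two_mul_mul_cos_of_mul_eq_pi {a : ℝ} (hb : b ≠ 0) (hba : b * a = π)
    (m : ℕ) :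
    ∫ u in (-a)..a, u ^ (2 * m) * cos (b * u) =
      -2 * (2 * m)! / b ^ (2 * m + 1)
        * ∑ l ∈ Icc 1 m, (-1) ^ (m - l) * (π ^ (2 * l - 1) / (2 * l - 1)!) := by
  induction m with
  | zero => simp [intervalIntegral.integral_comp_mul_left (fun u => cos u) hb, hba]
  | succ m ih =>
    rw [show 2 * (m + 1) = 2 * m + 2 by ring, integral_pow_add_two_mul_cos hb, ih,
      sum_Icc_one_succ_neg_one_pow_mul, mul_neg, hba, Odd.neg_pow ⟨m, rfl⟩,
      show 2 * (m + 1) - 1 = 2 * m + 1 by omega]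
    simp only [sin_pi, sin_neg, cos_pi, cos_neg, Nat.factorial_succ]
    rw [← hba]
    push_cast
    field_simp
    ring

end PowMulCos

theorem eta_even_formula_general (a : ℝ) (ha : 0 < a) (k : ℕ)
    (hke : Even k) :
    ∫ u in (-a)..a,
      u ^ k * ((deriv (fun u : ℝ => Real.cos (Real.pi / (2 * a) * u)) u) ^ 2
        - (Real.pi / (2 * a)) ^ 2 * (Real.cos (Real.pi / (2 * a) * u)) ^ 2)
    = (1 / 2) * ((Nat.factorial k : ℝ) / (2 * (Real.pi / (2 * a))) ^ (k - 1))
        * ∑ l ∈ Finset.Icc 1 (k / 2),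
            (-1 : ℝ) ^ (k / 2 - l) * Real.pi ^ (2 * l - 1)
              / (Nat.factorial (2 * l - 1) : ℝ) := by
  obtain ⟨m, rfl⟩ := hke
  set k₁ := π / (2 * a)
  have hderiv (u : ℝ) : deriv (fun u => cos (k₁ * u)) u = -(sin (k₁ * u) * k₁) := by
    simpa using (((hasDerivAt_id u).const_mul k₁).cos).deriv
  have hintegrand (u : ℝ) :
      u ^ (m + m) * (deriv (fun u => cos (k₁ * u)) u ^ 2 - k₁ ^ 2 * cos (k₁ * u) ^ 2)
        = -k₁ ^ 2 * (u ^ (2 * m) * cos (2 * k₁ * u)) := by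
    rw [hderiv, mul_assoc 2, cos_two_mul, two_mul m]
    linear_combination u ^ (m + m) * k₁ ^ 2 * sin_sq_add_cos_sq (k₁ * u)
  have hk₁ : 0 < k₁ := by positivity
  have hba : 2 * k₁ * a = π := by simp only [k₁]; field_simp
  rw [intervalIntegral.integral_congr fun u _ => hintegrand u, intervalIntegral.integral_const_mul,
    integral_pow_two_mul_mul_cos_of_mul_eq_pi (by positivity) hba, ← two_mul,
    Nat.mul_div_cancel_left m two_pos]
  simp only [mul_div_assoc]
  -- `k - 1` truncates at `k = 0`, where both sides vanish.
  rcases m with _ | m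
  · simp
  · rw [show 2 * (m + 1) + 1 = 2 * (m + 1) - 1 + 2 by omega, pow_add]
    field_simp

theorem eta_even_formula (a : ℝ) (ha : 0 < a) (k : ℕ)
    (hk : 2 ≤ k) (hke : Even k) :
    ∫ u in (-a)..a,
      u ^ k * ((deriv (fun u : ℝ => Real.cos (Real.pi / (2 * a) * u)) u) ^ 2
        - (Real.pi / (2 * a)) ^ 2 * (Real.cos (Real.pi / (2 * a) * u)) ^ 2)
    = (1 / 2) * ((Nat.factorial k : ℝ) / (2 * (Real.pi / (2 * a))) ^ (k - 1))
        * ∑ l ∈ Finset.Icc 1 (k / 2),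
            (-1 : ℝ) ^ (k / 2 - l) * Real.pi ^ (2 * l - 1)
              / (Nat.factorial (2 * l - 1) : ℝ) :=
  eta_even_formula_general a ha k hke
end

section
/- Let a > 0, k₁ = π/(2a), χ₁(u) = cos(k₁u), and for an integer k ≥ 0 set η_k = ∫_{−a}^{a} u^k (χ₁′(u)² − k₁² χ₁(u)²) du. If k ≥ 2 is even, then η_k > 0. -/
/-!
Since `χ₁'² − k₁²χ₁² = −k₁² cos (2k₁u) = −k₁² cos (πu/a)`, we have
`η_k = −k₁² ∫_{−a}^{a} u^k cos (πu/a) du`, which for even `k` is `−2k₁² ∫_0^a u^k cos (πu/a) du`.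
Folding `[0, a]` about `a/2`, where `cos (π(a − x)/a) = −cos (πx/a)`, turns the last integral
into `∫_0^{a/2} (x^k − (a − x)^k) cos (πx/a) dx`, whose integrand is negative on `(0, a/2)`.
-/

open Real MeasureTheory

namespace intervalIntegral

variable {E : Type*} [NormedAddCommGroup E] [NormedSpace ℝ E] {f : ℝ → E}

theorem integral_neg_self_eq_two_smul_of_even (hf : Continuous f) (heven : ∀ x, f (-x) = f x)
    (a : ℝ) : ∫ x in (-a)..a, f x = (2 : ℝ) • ∫ x in (0 : ℝ)..a, f x := by
  have hleft : ∫ x in (-a)..0, f x = ∫ x in (0 : ℝ)..a, f x := by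
    simpa only [heven, neg_zero] using (integral_comp_neg (a := 0) (b := a) f).symm
  rw [← integral_add_adjacent_intervals (hf.intervalIntegrable (-a) 0)
    (hf.intervalIntegrable 0 a), hleft, two_smul]

theorem integral_eq_integral_add_reflect (hf : Continuous f) (a : ℝ) :
    ∫ x in (0 : ℝ)..a, f x = ∫ x in (0 : ℝ)..(a / 2), (f x + f (a - x)) := by
  have hreflect : ∫ x in (0 : ℝ)..(a / 2), f (a - x) = ∫ x in (a / 2)..a, f x := by
    rw [integral_comp_sub_left f a]
    congr 1 <;> ring
  rw [integral_add (hf.intervalIntegrable 0 (a / 2))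
      ((by fun_prop : Continuous fun x => f (a - x)).intervalIntegrable 0 (a / 2)),
    hreflect, integral_add_adjacent_intervals (hf.intervalIntegrable 0 (a / 2))
      (hf.intervalIntegrable (a / 2) a)]

end intervalIntegral

theorem sq_deriv_cos_const_mul_sub (c u : ℝ) :
    deriv (fun u : ℝ => cos (c * u)) u ^ 2 - c ^ 2 * cos (c * u) ^ 2
      = -c ^ 2 * cos (2 * c * u) := by
  have hderiv : deriv (fun u : ℝ => cos (c * u)) u = -sin (c * u) * c := by
    simpa only [id, mul_one] using ((hasDerivAt_id u).const_mul c).cos.deriv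
  rw [hderiv, mul_assoc, cos_two_mul']
  ring

theorem cos_pi_div_mul_pos {a x : ℝ} (ha : 0 < a) (hx : x ∈ Set.Ioo (0 : ℝ) (a / 2)) :
    0 < cos (π / a * x) := by
  obtain ⟨hx0, hxa⟩ := hx
  apply cos_pos_of_mem_Ioo
  constructor
  · have : 0 ≤ π / a * x := by positivity
    linarith [pi_pos]
  · rw [div_mul_eq_mul_div, div_lt_div_iff₀ ha two_pos]
    nlinarith [pi_pos]

theorem integral_pow_mul_cos_pi_div_neg {a : ℝ} (ha : 0 < a) {k : ℕ} (hk : k ≠ 0) :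
    ∫ x in (0 : ℝ)..a, x ^ k * cos (π / a * x) < 0 := by
  have hfold : ∀ x, x ^ k * cos (π / a * x) + (a - x) ^ k * cos (π / a * (a - x))
      = -(((a - x) ^ k - x ^ k) * cos (π / a * x)) := by
    intro x
    rw [show π / a * (a - x) = π - π / a * x by field_simp, cos_pi_sub]
    ring
  rw [intervalIntegral.integral_eq_integral_add_reflect (by fun_prop)]
  simp only [hfold, intervalIntegral.integral_neg, neg_lt_zero]
  refine intervalIntegral.intervalIntegral_pos_of_pos_on
    (Continuous.intervalIntegrable (by fun_prop) _ _) (fun x hx => ?_) (by linarith)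
  have hpow : x ^ k < (a - x) ^ k := pow_lt_pow_left₀ (by linarith [hx.2]) hx.1.le hk
  exact mul_pos (sub_pos.mpr hpow) (cos_pi_div_mul_pos ha hx)

theorem eta_even_pos (a : ℝ) (ha : 0 < a) (k : ℕ)
    (hk : 2 ≤ k) (hke : Even k) :
    0 < ∫ u in (-a)..a,
      u ^ k * ((deriv (fun u : ℝ => Real.cos (Real.pi / (2 * a) * u)) u) ^ 2
        - (Real.pi / (2 * a)) ^ 2 * (Real.cos (Real.pi / (2 * a) * u)) ^ 2) := by
  set c := π / (2 * a)
  have htwo_c : 2 * c = π / a := by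
    simp only [c]
    field_simp
  have hintegrand : ∀ u : ℝ, u ^ k * (deriv (fun u : ℝ => cos (c * u)) u ^ 2
      - c ^ 2 * cos (c * u) ^ 2) = -c ^ 2 * (u ^ k * cos (π / a * u)) := by
    intro u
    rw [sq_deriv_cos_const_mul_sub, htwo_c]
    ring
  have heven : ∀ u : ℝ, (-u) ^ k * cos (π / a * -u) = u ^ k * cos (π / a * u) := by
    intro u
    rw [hke.neg_pow, mul_neg, cos_neg]
  simp only [hintegrand, intervalIntegral.integral_const_mul]
  rw [intervalIntegral.integral_neg_self_eq_two_smul_of_even (by fun_prop) heven, smul_eq_mul]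
  have hc : 0 < c := by positivity
  have hneg := integral_pow_mul_cos_pi_div_neg ha (k := k) (by omega)
  nlinarith [mul_pos (pow_pos hc 2) (neg_pos.mpr hneg)]
end

section
/- There exist constants C > 0 and s₀ ≥ 1 such that for all s ≥ s₀ one has s² − C·s ≤ r(s)² ≤ s² + C·s. -/
/-!
Along the profile, `(r r')' = r'² + r r'' = 1 - z'² - k_s k_θ r² = 1 - (k_θ² + k_s k_θ) r²`,
using `r'² + z'² = 1`, the Jacobi equation and `z' = k_θ r`. The curvature term is integrable
on `[0, ∞)`, say with `L¹` norm `M`, so `r r' ≥ s - M`; integrating `(r²)' = 2 r r'` gives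
`r² ≥ s² - 2 M s`. Conversely `r' ≤ 1` gives `0 < r(s) ≤ s`.
-/

open Real MeasureTheory

/-- Radial principal curvature `k_s = r′z″ − r″z′` of the rotational hypersurface
with profile curve `(r, z)`. -/
noncomputable def radialCurv (r z : ℝ → ℝ) (s : ℝ) : ℝ :=
  deriv r s * deriv (deriv z) s - deriv (deriv r) s * deriv z s

/-- Angular principal curvature `k_θ = z′/r` of the rotational hypersurface
with profile curve `(r, z)`. -/
noncomputable def angularCurv (r z : ℝ → ℝ) (s : ℝ) : ℝ :=
  deriv z s / r s

open Set

/-- By the Gauss equation, the Ricci curvature of `Σ` in an angular unit direction. -/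
noncomputable def angularRicci (r z : ℝ → ℝ) (s : ℝ) : ℝ :=
  angularCurv r z s * (angularCurv r z s + radialCurv r z s)

theorem measurable_radialCurv (r z : ℝ → ℝ) : Measurable (radialCurv r z) :=
  ((measurable_deriv r).mul (measurable_deriv _)).sub
    ((measurable_deriv _).mul (measurable_deriv z))

theorem measurable_angularCurv {r : ℝ → ℝ} (hr : Measurable r) (z : ℝ → ℝ) :
    Measurable (angularCurv r z) :=
  (measurable_deriv z).div hr

theorem integrableOn_angularRicci_mul_sq {r z : ℝ → ℝ} {S : Set ℝ} (hr : Measurable r)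
    (h₁ : IntegrableOn (fun s => angularCurv r z s ^ 2 * r s ^ 2) S)
    (h₂ : IntegrableOn (fun s => |radialCurv r z s * angularCurv r z s| * r s ^ 2) S) :
    IntegrableOn (fun s => angularRicci r z s * r s ^ 2) S := by
  have h₂' : IntegrableOn (fun s => radialCurv r z s * angularCurv r z s * r s ^ 2) S := by
    refine h₂.mono' ?_ (ae_of_all _ fun s => ?_)
    · exact (((measurable_radialCurv r z).mul (measurable_angularCurv hr z)).mul
        (hr.pow_const 2)).aestronglyMeasurable
    · rw [norm_mul, Real.norm_eq_abs, Real.norm_of_nonneg (sq_nonneg _)]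
  have hsplit : (fun s => angularRicci r z s * r s ^ 2) =
      fun s => angularCurv r z s ^ 2 * r s ^ 2 +
        radialCurv r z s * angularCurv r z s * r s ^ 2 := by
    funext s
    simp only [angularRicci]
    ring
  exact hsplit ▸ h₁.add h₂'

theorem hasDerivAt_mul_deriv_of_jacobi {r z : ℝ → ℝ} {t : ℝ}
    (hr : DifferentiableAt ℝ r t) (hr' : DifferentiableAt ℝ (deriv r) t) (hrt : r t ≠ 0)
    (harc : deriv r t ^ 2 + deriv z t ^ 2 = 1)
    (hjac : deriv (deriv r) t + radialCurv r z t * angularCurv r z t * r t = 0) :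
    HasDerivAt (fun u => r u * deriv r u) (1 - angularRicci r z t * r t ^ 2) t := by
  refine (hr.hasDerivAt.fun_mul hr'.hasDerivAt).congr_deriv ?_
  have hz : deriv z t = angularCurv r z t * r t := by
    rw [angularCurv, div_mul_cancel₀ _ hrt]
  rw [hz] at harc
  simp only [angularRicci]
  linear_combination harc + r t * hjac

theorem abs_intervalIntegral_le_integral_Ici_abs {g : ℝ → ℝ} {a b : ℝ}
    (hg : IntegrableOn g (Ici a)) (hab : a ≤ b) :
    |∫ t in a..b, g t| ≤ ∫ t in Ici a, |g t| :=
  calc |∫ t in a..b, g t|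
    _ ≤ ∫ t in a..b, |g t| := intervalIntegral.abs_integral_le_integral_abs hab
    _ = ∫ t in Ioc a b, |g t| := intervalIntegral.integral_of_le hab
    _ ≤ ∫ t in Ici a, |g t| :=
      setIntegral_mono_set hg.abs (ae_of_all _ fun _ => abs_nonneg _)
        (Ioc_subset_Icc_self.trans Icc_subset_Ici_self).eventuallyLE

theorem le_of_hasDerivAt_le_of_le {f g f' g' : ℝ → ℝ} {a b : ℝ}
    (hf : ∀ t, HasDerivAt f (f' t) t) (hg : ∀ t, HasDerivAt g (g' t) t) (ha : f a ≤ g a)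
    (hderiv : ∀ t > a, f' t ≤ g' t) (hab : a ≤ b) : f b ≤ g b := by
  have hmono : MonotoneOn (fun t => g t - f t) (Ici a) := by
    refine monotoneOn_of_hasDerivWithinAt_nonneg (convex_Ici a)
      (fun t _ => ((hg t).sub (hf t)).continuousAt.continuousWithinAt)
      (fun t _ => ((hg t).sub (hf t)).hasDerivWithinAt) fun t ht => ?_
    rw [interior_Ici] at ht
    exact sub_nonneg.mpr (hderiv t ht)
  linarith [hmono self_mem_Ici hab hab]

theorem mul_deriv_eq_sub_integral_angularRicci {r z : ℝ → ℝ} (hr : ContDiff ℝ 2 r)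
    (hr0 : r 0 = 0) (hrpos : ∀ s > 0, 0 < r s)
    (harc : ∀ s ≥ 0, (deriv r s) ^ 2 + (deriv z s) ^ 2 = 1)
    (hjac : ∀ s > 0, deriv (deriv r) s + radialCurv r z s * angularCurv r z s * r s = 0)
    (hint : IntegrableOn (fun s => angularRicci r z s * r s ^ 2) (Ici 0)) {s : ℝ} (hs : 0 ≤ s) :
    r s * deriv r s = s - ∫ t in (0 : ℝ)..s, angularRicci r z t * r t ^ 2 := by
  have hr' : ContDiff ℝ 1 (deriv r) := hr.deriv'
  have hint_s : IntervalIntegrable (fun t => angularRicci r z t * r t ^ 2) volume 0 s :=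
    (intervalIntegrable_iff_integrableOn_Ioc_of_le hs).mpr
      (hint.mono_set (Ioc_subset_Icc_self.trans Icc_subset_Ici_self))
  have hFTC := intervalIntegral.integral_eq_sub_of_hasDerivAt_of_le hs
    (hr.continuous.mul hr'.continuous).continuousOn
    (fun t ht => hasDerivAt_mul_deriv_of_jacobi (hr.differentiable two_ne_zero t)
      (hr'.differentiable one_ne_zero t) (hrpos t ht.1).ne' (harc t ht.1.le) (hjac t ht.1))
    (intervalIntegrable_const.sub hint_s)
  rw [intervalIntegral.integral_sub intervalIntegrable_const hint_s, Pi.mul_apply, Pi.mul_apply,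
    hr0] at hFTC
  simp only [intervalIntegral.integral_const, sub_zero, smul_eq_mul, mul_one, zero_mul] at hFTC
  linarith

theorem r_sq_two_sided_bound_general
    (r z : ℝ → ℝ)
    (hr : ContDiff ℝ 2 r)
    (hr0 : r 0 = 0)
    (hrpos : ∀ s > 0, 0 < r s)
    (harc : ∀ s ≥ 0, (deriv r s) ^ 2 + (deriv z s) ^ 2 = 1)
    (hjac : ∀ s > 0,
      deriv (deriv r) s + radialCurv r z s * angularCurv r z s * r s = 0)
    (hint1 : IntegrableOn (fun s => (angularCurv r z s) ^ 2 * (r s) ^ 2) (Set.Ici 0))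
    (hint2 : IntegrableOn (fun s => |radialCurv r z s * angularCurv r z s| * (r s) ^ 2) (Set.Ici 0))
    : ∃ C > (0 : ℝ), ∃ s₀ ≥ (1 : ℝ), ∀ s ≥ s₀,
      s ^ 2 - C * s ≤ (r s) ^ 2 ∧ (r s) ^ 2 ≤ s ^ 2 + C * s := by
  have hrd : Differentiable ℝ r := hr.differentiable two_ne_zero
  have hint := integrableOn_angularRicci_mul_sq hrd.continuous.measurable hint1 hint2
  set M := ∫ t in Ici (0 : ℝ), |angularRicci r z t * r t ^ 2|
  have hM : 0 ≤ M := integral_nonneg fun _ => abs_nonneg _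
  have hrr' : ∀ t > 0, t - M ≤ r t * deriv r t := fun t ht => by
    rw [mul_deriv_eq_sub_integral_angularRicci hr hr0 hrpos harc hjac hint ht.le]
    linarith [(abs_le.mp (abs_intervalIntegral_le_integral_Ici_abs hint ht.le)).2]
  have hlower : ∀ s ≥ 0, s ^ 2 - 2 * M * s ≤ r s ^ 2 := fun s hs =>
    le_of_hasDerivAt_le_of_le (f := fun t => t ^ 2 - 2 * M * t)
      (fun t => ((hasDerivAt_pow 2 t).sub ((hasDerivAt_id t).const_mul (2 * M))))
      (fun t => (hrd t).hasDerivAt.pow 2) (by simp [hr0])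
      (fun t ht => by
        simp only [Nat.cast_ofNat, Nat.reduceSub, pow_one, mul_one]
        linarith [hrr' t ht]) hs
  have hupper : ∀ s ≥ 0, r s ≤ s := fun s hs =>
    le_of_hasDerivAt_le_of_le (fun t => (hrd t).hasDerivAt) hasDerivAt_id (by simp [hr0])
      (fun t ht => by nlinarith [harc t ht.le, sq_nonneg (deriv z t), sq_nonneg (deriv r t - 1)]) hs
  refine ⟨2 * M + 1, by positivity, 1, le_rfl, fun s hs => ⟨?_, ?_⟩⟩
  · nlinarith [hlower s (by linarith)]
  · nlinarith [hupper s (by linarith), hrpos s (by linarith)]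

theorem r_sq_two_sided_bound
    (r z : ℝ → ℝ)
    (hr : ContDiff ℝ 2 r) (hz : ContDiff ℝ 2 z)
    (hr0 : r 0 = 0) (hr0' : deriv r 0 = 1)
    (hrpos : ∀ s > 0, 0 < r s)
    (harc : ∀ s ≥ 0, (deriv r s) ^ 2 + (deriv z s) ^ 2 = 1)
    (hjac : ∀ s > 0,
      deriv (deriv r) s + radialCurv r z s * angularCurv r z s * r s = 0)
    (hint1 : IntegrableOn (fun s => (angularCurv r z s) ^ 2 * (r s) ^ 2) (Set.Ici 0))
    (hint2 : IntegrableOn (fun s => |radialCurv r z s * angularCurv r z s| * (r s) ^ 2) (Set.Ici 0))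
    : ∃ C > (0 : ℝ), ∃ s₀ ≥ (1 : ℝ), ∀ s ≥ s₀,
      s ^ 2 - C * s ≤ (r s) ^ 2 ∧ (r s) ^ 2 ≤ s ^ 2 + C * s :=
  r_sq_two_sided_bound_general r z hr hr0 hrpos harc hjac hint1 hint2
end

section
/- The limit lim_{s→∞} r(s)/s = 1 holds. -/
/-!
Since `r'² + z'² = 1`, the first integrability hypothesis says that `1 - r'²` is integrable,
and by the Jacobi equation the second one says that `r r''` is integrable. Integrating
`(r r')' = r'² + r r'' = 1 - (1 - r'²) + r r''` shows that `r r' - s` converges, so `r r' → ∞`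
and `r' > 0` eventually. Where `0 < r' ≤ 1` we have `0 ≤ 1 - r' ≤ 1 - r'²`, so `1 - r'` is
integrable as well, i.e. `s - r(s)` converges, and therefore `r(s)/s → 1`.
-/

open Real MeasureTheory

open Filter Topology Set

lemma integrableOn_one_sub_of_integrableOn_one_sub_sq {g : ℝ → ℝ} {a : ℝ}
    (hg : Continuous g) (hg01 : ∀ᶠ x in atTop, 0 ≤ g x ∧ g x ≤ 1)
    (h : IntegrableOn (fun x => 1 - g x ^ 2) (Ioi a)) :
    IntegrableOn (fun x => 1 - g x) (Ioi a) := by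
  have hbound : (fun x => 1 - g x) =O[atTop] fun x => 1 - g x ^ 2 := by
    refine Asymptotics.IsBigO.of_bound 1 ?_
    filter_upwards [hg01] with x ⟨h0, h1⟩
    rw [one_mul, Real.norm_of_nonneg (by linarith), Real.norm_of_nonneg (by nlinarith)]
    nlinarith
  have hloc : LocallyIntegrableOn (fun x => 1 - g x) (Ici a) :=
    (continuous_const.sub hg).locallyIntegrable.locallyIntegrableOn _
  exact (hloc.integrableOn_of_isBigO_atTop hbound ⟨Ioi a, Ioi_mem_atTop a, h⟩).mono_set
    Ioi_subset_Ici_self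

lemma tendsto_div_nhds_one_of_tendsto_sub {f : ℝ → ℝ} {L : ℝ}
    (hf : Tendsto (fun s => s - f s) atTop (𝓝 L)) :
    Tendsto (fun s => f s / s) atTop (𝓝 1) := by
  have h := (tendsto_const_nhds (x := (1 : ℝ))).sub (hf.div_atTop tendsto_id)
  rw [sub_zero] at h
  refine h.congr' ?_
  filter_upwards [eventually_ne_atTop 0] with s hs
  simp only [id]
  field_simp
  ring

section

variable {r : ℝ → ℝ}

lemma continuous_deriv_deriv (hr : ContDiff ℝ 2 r) : Continuous (deriv (deriv r)) :=
  (contDiff_succ_iff_deriv.mp hr).2.2.continuous_deriv le_rfl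

lemma integral_deriv_sq_add_mul_deriv_deriv (hr : ContDiff ℝ 2 r) (a b : ℝ) :
    ∫ t in a..b, (deriv r t ^ 2 + r t * deriv (deriv r) t) =
      r b * deriv r b - r a * deriv r a := by
  refine intervalIntegral.integral_eq_sub_of_hasDerivAt (f := fun t => r t * deriv r t)
    (fun x _ => ?_) ?_
  · exact ((hr.differentiable two_ne_zero x).hasDerivAt.fun_mul
      ((contDiff_succ_iff_deriv.mp hr).2.2.differentiable one_ne_zero x).hasDerivAt).congr_deriv
      (by ring)
  · exact (((hr.continuous_deriv one_le_two).pow 2).add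
      (hr.continuous.mul (continuous_deriv_deriv hr))).intervalIntegrable _ _

lemma tendsto_mul_deriv_atTop (hr : ContDiff ℝ 2 r) {a : ℝ}
    (hsq : IntegrableOn (fun s => 1 - deriv r s ^ 2) (Ioi a))
    (hmul : IntegrableOn (fun s => r s * deriv (deriv r) s) (Ioi a)) :
    Tendsto (fun s => r s * deriv r s) atTop atTop := by
  have hcont : Continuous fun t => deriv r t ^ 2 + r t * deriv (deriv r) t :=
    ((hr.continuous_deriv one_le_two).pow 2).add
      (hr.continuous.mul (continuous_deriv_deriv hr))
  have hlim := intervalIntegral_tendsto_integral_Ioi a (hmul.sub hsq) tendsto_id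
  refine (hlim.add_atTop (tendsto_atTop_add_const_right _ (r a * deriv r a - a) tendsto_id)).congr
    fun s => ?_
  simp only [id_eq, Pi.sub_apply]
  have hint : ∫ t in a..s, (r t * deriv (deriv r) t - (1 - deriv r t ^ 2)) =
      ∫ t in a..s, ((deriv r t ^ 2 + r t * deriv (deriv r) t) - 1) :=
    intervalIntegral.integral_congr fun t _ => by ring
  rw [hint, intervalIntegral.integral_sub (hcont.intervalIntegrable _ _) intervalIntegrable_const,
    integral_deriv_sq_add_mul_deriv_deriv hr, intervalIntegral.integral_const, smul_eq_mul, mul_one]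
  ring

lemma tendsto_sub_of_integrableOn_one_sub_deriv (hr : ContDiff ℝ 1 r) {a : ℝ}
    (h : IntegrableOn (fun s => 1 - deriv r s) (Ioi a)) :
    Tendsto (fun s => s - r s) atTop (𝓝 ((∫ s in Ioi a, (1 - deriv r s)) + (a - r a))) := by
  refine ((intervalIntegral_tendsto_integral_Ioi a h tendsto_id).add_const (a - r a)).congr
    fun s => ?_
  rw [id, intervalIntegral.integral_sub intervalIntegrable_const
    ((hr.continuous_deriv le_rfl).intervalIntegrable _ _), intervalIntegral.integral_const,
    intervalIntegral.integral_deriv_eq_sub (fun x _ => hr.differentiable one_ne_zero x)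
      ((hr.continuous_deriv le_rfl).intervalIntegrable _ _), smul_eq_mul, mul_one]
  ring

theorem tendsto_div_nhds_one_of_integrableOn (hr : ContDiff ℝ 2 r) {a : ℝ}
    (hpos : ∀ᶠ s in atTop, 0 < r s) (hle : ∀ᶠ s in atTop, deriv r s ≤ 1)
    (hsq : IntegrableOn (fun s => 1 - deriv r s ^ 2) (Ioi a))
    (hmul : IntegrableOn (fun s => r s * deriv (deriv r) s) (Ioi a)) :
    Tendsto (fun s => r s / s) atTop (𝓝 1) := by
  have hderiv : ∀ᶠ s in atTop, 0 ≤ deriv r s ∧ deriv r s ≤ 1 := by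
    filter_upwards [(tendsto_mul_deriv_atTop hr hsq hmul).eventually_gt_atTop 0, hpos, hle]
      with s hrr' hrs hle
    exact ⟨(pos_of_mul_pos_right hrr' hrs.le).le, hle⟩
  have hint : IntegrableOn (fun s => 1 - deriv r s) (Ioi a) :=
    integrableOn_one_sub_of_integrableOn_one_sub_sq (hr.continuous_deriv one_le_two) hderiv hsq
  exact tendsto_div_nhds_one_of_tendsto_sub
    (tendsto_sub_of_integrableOn_one_sub_deriv (hr.of_le one_le_two) hint)

end

theorem r_over_s_tendsto_one_general
    (r z : ℝ → ℝ)
    (hr : ContDiff ℝ 2 r)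
    (hrpos : ∀ s > 0, 0 < r s)
    (harc : ∀ s ≥ 0, (deriv r s) ^ 2 + (deriv z s) ^ 2 = 1)
    (hjac : ∀ s > 0,
      deriv (deriv r) s + radialCurv r z s * angularCurv r z s * r s = 0)
    (hint1 : IntegrableOn (fun s => (angularCurv r z s) ^ 2 * (r s) ^ 2) (Set.Ici 0))
    (hint2 : IntegrableOn (fun s => |radialCurv r z s * angularCurv r z s| * (r s) ^ 2) (Set.Ici 0))
    : Filter.Tendsto (fun s => r s / s) Filter.atTop (nhds 1) := by
  have hsq : IntegrableOn (fun s => 1 - deriv r s ^ 2) (Ioi 0) := by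
    refine (hint1.mono_set Ioi_subset_Ici_self).congr_fun (fun s hs => ?_) measurableSet_Ioi
    simp only [angularCurv]
    rw [div_pow, div_mul_cancel₀ _ (pow_ne_zero 2 (hrpos s hs).ne')]
    linarith [harc s (le_of_lt hs)]
  have hmul : IntegrableOn (fun s => r s * deriv (deriv r) s) (Ioi 0) := by
    refine (integrable_norm_iff
      (hr.continuous.mul (continuous_deriv_deriv hr)).aestronglyMeasurable).mp
      ((hint2.mono_set Ioi_subset_Ici_self).congr_fun (fun s hs => ?_) measurableSet_Ioi)
    simp only [Real.norm_eq_abs, Pi.mul_apply]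
    rw [show r s * deriv (deriv r) s =
      -(radialCurv r z s * angularCurv r z s * r s ^ 2) by linear_combination r s * hjac s hs,
      abs_neg, abs_mul _ (r s ^ 2), abs_of_nonneg (sq_nonneg (r s))]
  have hle : ∀ᶠ s in atTop, deriv r s ≤ 1 := by
    filter_upwards [eventually_ge_atTop 0] with s hs
    nlinarith [harc s hs, sq_nonneg (deriv z s)]
  exact tendsto_div_nhds_one_of_integrableOn hr ((eventually_gt_atTop 0).mono hrpos) hle hsq hmul

theorem r_over_s_tendsto_one
    (r z : ℝ → ℝ)
    (hr : ContDiff ℝ 2 r) (hz : ContDiff ℝ 2 z)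
    (hr0 : r 0 = 0) (hr0' : deriv r 0 = 1)
    (hrpos : ∀ s > 0, 0 < r s)
    (harc : ∀ s ≥ 0, (deriv r s) ^ 2 + (deriv z s) ^ 2 = 1)
    (hjac : ∀ s > 0,
      deriv (deriv r) s + radialCurv r z s * angularCurv r z s * r s = 0)
    (hint1 : IntegrableOn (fun s => (angularCurv r z s) ^ 2 * (r s) ^ 2) (Set.Ici 0))
    (hint2 : IntegrableOn (fun s => |radialCurv r z s * angularCurv r z s| * (r s) ^ 2) (Set.Ici 0))
    : Filter.Tendsto (fun s => r s / s) Filter.atTop (nhds 1) :=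
  r_over_s_tendsto_one_general r z hr hrpos harc hjac hint1 hint2
end

section
/- The limit lim_{s→∞} r′(s) = 1 holds. -/
open Real MeasureTheory

/-! `(r r')' = r'² + r r'' = 1 - w` with `w = z'² + k_s k_θ r²` integrable (as `z'² = k_θ² r²`),
so `r r' = t + O(1)`; since `|r'| ≤ 1` this forces `r ≥ t/2` and `r' > 0` for large `t`.
Then `(r'²)' = 2 r' r'' = -2 r' k_s k_θ r` is dominated by `2 |k_s k_θ| r²`, so `1 - r'² = z'²`
is integrable together with its derivative and therefore tends to `0`. -/

open Set Filter Topology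

theorem ContDiff.continuous_deriv_deriv {f : ℝ → ℝ} (hf : ContDiff ℝ 2 f) :
    Continuous (deriv (deriv f)) :=
  (hf.deriv' (n := 1)).continuous_deriv le_rfl

theorem tendsto_one_of_sq_tendsto_one {α : Type*} {l : Filter α} {f : α → ℝ}
    (hsq : Tendsto (fun x => f x ^ 2) l (𝓝 1)) (hf : ∀ᶠ x in l, 0 ≤ f x) :
    Tendsto f l (𝓝 1) := by
  have h := (continuous_sqrt.tendsto 1).comp hsq
  rw [Function.comp_def, sqrt_one] at h
  refine h.congr' ?_
  filter_upwards [hf] with x hx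
  exact sqrt_sq hx

section RotationalHypersurface

variable {r z : ℝ → ℝ}

theorem abs_deriv_le_one (harc : ∀ s ≥ 0, deriv r s ^ 2 + deriv z s ^ 2 = 1)
    {s : ℝ} (hs : 0 ≤ s) : |deriv r s| ≤ 1 :=
  sq_le_one_iff_abs_le_one _ |>.mp (by nlinarith [harc s hs, sq_nonneg (deriv z s)])

theorem integrableOn_deriv_sq_of_integrableOn_angularCurv (hrpos : ∀ s > 0, 0 < r s)
    (hint : IntegrableOn (fun s => angularCurv r z s ^ 2 * r s ^ 2) (Ici 0)) :
    IntegrableOn (fun s => deriv z s ^ 2) (Ioi 0) := by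
  refine (hint.mono_set Ioi_subset_Ici_self).congr_fun (fun s hs => ?_) measurableSet_Ioi
  simp only [angularCurv]
  field_simp [(hrpos s hs).ne']

theorem integrableOn_radialCurv_mul_angularCurv_mul_sq (hr : Measurable r) {S : Set ℝ}
    (hint : IntegrableOn (fun s => |radialCurv r z s * angularCurv r z s| * r s ^ 2) S) :
    IntegrableOn (fun s => radialCurv r z s * angularCurv r z s * r s ^ 2) S := by
  have hmeas : Measurable fun s => radialCurv r z s * angularCurv r z s * r s ^ 2 := by
    unfold radialCurv angularCurv
    exact ((((measurable_deriv r).mul (measurable_deriv _)).sub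
      ((measurable_deriv _).mul (measurable_deriv z))).mul
      ((measurable_deriv z).div hr)).mul (hr.pow_const 2)
  refine hint.mono' hmeas.aestronglyMeasurable (Eventually.of_forall fun s => ?_)
  rw [norm_mul, norm_pow, norm_eq_abs, norm_eq_abs, sq_abs]

theorem mul_deriv_sub_mul_deriv_eq (hr : ContDiff ℝ 2 r)
    (harc : ∀ s ≥ 0, deriv r s ^ 2 + deriv z s ^ 2 = 1)
    (hjac : ∀ s > 0, deriv (deriv r) s + radialCurv r z s * angularCurv r z s * r s = 0)
    (hw : IntegrableOn
      (fun s => deriv z s ^ 2 + radialCurv r z s * angularCurv r z s * r s ^ 2) (Ioi 0))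
    {t : ℝ} (ht : 0 ≤ t) :
    r t * deriv r t - r 0 * deriv r 0 =
      t - ∫ s in 0..t, deriv z s ^ 2 + radialCurv r z s * angularCurv r z s * r s ^ 2 := by
  have hderiv : ∀ s, HasDerivAt (fun x => r x * deriv r x)
      (deriv r s ^ 2 + r s * deriv (deriv r) s) s := fun s =>
    ((hr.differentiable two_ne_zero s).hasDerivAt.mul
      (hr.differentiable_deriv_two s).hasDerivAt).congr_deriv (by ring)
  have hcont : Continuous fun s => deriv r s ^ 2 + r s * deriv (deriv r) s :=
    ((hr.continuous_deriv one_le_two).pow 2).add (hr.continuous.mul hr.continuous_deriv_deriv)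
  have hw0t : IntervalIntegrable (fun s => deriv z s ^ 2 +
      radialCurv r z s * angularCurv r z s * r s ^ 2) volume 0 t := by
    rw [intervalIntegrable_iff, uIoc_of_le ht]
    exact hw.mono_set Ioc_subset_Ioi_self
  calc r t * deriv r t - r 0 * deriv r 0
      = ∫ s in 0..t, deriv r s ^ 2 + r s * deriv (deriv r) s :=
        (intervalIntegral.integral_eq_sub_of_hasDerivAt (fun s _ => hderiv s)
          (hcont.intervalIntegrable 0 t)).symm
    _ = ∫ s in 0..t, 1 - (deriv z s ^ 2 + radialCurv r z s * angularCurv r z s * r s ^ 2) := by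
        refine intervalIntegral.integral_congr_ae (Eventually.of_forall fun s hs => ?_)
        rw [uIoc_of_le ht] at hs
        linear_combination harc s hs.1.le + r s * hjac s hs.1
    _ = _ := by
        rw [intervalIntegral.integral_sub intervalIntegrable_const hw0t,
          intervalIntegral.integral_const, smul_eq_mul, mul_one, sub_zero]

theorem eventually_one_le_and_deriv_pos (hr : ContDiff ℝ 2 r) (hrpos : ∀ s > 0, 0 < r s)
    (harc : ∀ s ≥ 0, deriv r s ^ 2 + deriv z s ^ 2 = 1)
    (hjac : ∀ s > 0, deriv (deriv r) s + radialCurv r z s * angularCurv r z s * r s = 0)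
    (hw : IntegrableOn
      (fun s => deriv z s ^ 2 + radialCurv r z s * angularCurv r z s * r s ^ 2) (Ioi 0)) :
    ∀ᶠ t in atTop, 1 ≤ r t ∧ 0 < deriv r t := by
  set c := ∫ s in Ioi 0, deriv z s ^ 2 + radialCurv r z s * angularCurv r z s * r s ^ 2
  have hbdd : ∀ᶠ t in atTop,
      ∫ s in 0..t, deriv z s ^ 2 + radialCurv r z s * angularCurv r z s * r s ^ 2 ≤ c + 1 :=
    (intervalIntegral_tendsto_integral_Ioi 0 hw tendsto_id).eventually
      (eventually_le_nhds (lt_add_one c))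
  filter_upwards [hbdd, eventually_ge_atTop (max 2 (2 * (c + 1 - r 0 * deriv r 0)))]
    with t hint ht
  have ht2 : 2 ≤ t := le_of_max_le_left ht
  have hrt : 0 < r t := hrpos t (by linarith)
  have hgrowth : t / 2 ≤ r t * deriv r t := by
    linarith [mul_deriv_sub_mul_deriv_eq hr harc hjac hw (t := t) (by linarith),
      le_of_max_le_right ht]
  have hr' := abs_deriv_le_one harc (s := t) (by linarith)
  constructor
  · nlinarith [le_abs_self (deriv r t)]
  · exact pos_of_mul_pos_right (by linarith) hrt.le

theorem integrableOn_deriv_mul_deriv_deriv (hr : ContDiff ℝ 2 r)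
    (harc : ∀ s ≥ 0, deriv r s ^ 2 + deriv z s ^ 2 = 1)
    (hjac : ∀ s > 0, deriv (deriv r) s + radialCurv r z s * angularCurv r z s * r s = 0)
    (hint : IntegrableOn (fun s => |radialCurv r z s * angularCurv r z s| * r s ^ 2) (Ici 0))
    {T : ℝ} (hT : 0 ≤ T) (hrT : ∀ s > T, 1 ≤ r s) :
    IntegrableOn (fun s => deriv r s * deriv (deriv r) s) (Ioi T) := by
  have hcont : Continuous fun s => deriv r s * deriv (deriv r) s :=
    (hr.continuous_deriv one_le_two).mul hr.continuous_deriv_deriv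
  refine (hint.mono_set fun s hs => hT.trans (le_of_lt hs)).mono' hcont.aestronglyMeasurable
    ((ae_restrict_iff' measurableSet_Ioi).mpr (Eventually.of_forall fun s hs => ?_))
  have hs0 : 0 < s := hT.trans_lt hs
  have hr' := abs_deriv_le_one harc hs0.le
  have hrs := hrT s hs
  have hk := abs_nonneg (radialCurv r z s * angularCurv r z s)
  rw [eq_neg_of_add_eq_zero_left (hjac s hs0), norm_eq_abs, abs_mul, abs_neg, abs_mul,
    abs_of_pos (by linarith : 0 < r s)]
  calc |deriv r s| * (|radialCurv r z s * angularCurv r z s| * r s)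
      ≤ 1 * (|radialCurv r z s * angularCurv r z s| * r s) := by gcongr
    _ ≤ |radialCurv r z s * angularCurv r z s| * r s ^ 2 := by
        nlinarith [mul_le_mul_of_nonneg_left hrs (mul_nonneg hk (by linarith : (0:ℝ) ≤ r s))]

theorem tendsto_deriv_sq_one (hr : ContDiff ℝ 2 r)
    (harc : ∀ s ≥ 0, deriv r s ^ 2 + deriv z s ^ 2 = 1)
    (hz : IntegrableOn (fun s => deriv z s ^ 2) (Ioi 0)) {T : ℝ} (hT : 0 ≤ T)
    (hrr' : IntegrableOn (fun s => deriv r s * deriv (deriv r) s) (Ioi T)) :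
    Tendsto (fun t => deriv r t ^ 2) atTop (𝓝 1) := by
  have hderiv : ∀ s ∈ Ioi T, HasDerivAt (fun x => 1 - deriv r x ^ 2)
      (-(2 * (deriv r s * deriv (deriv r) s))) s := fun s _ =>
    (((hr.differentiable_deriv_two s).hasDerivAt.pow 2).const_sub 1).congr_deriv (by ring)
  have hz' : IntegrableOn (fun s => 1 - deriv r s ^ 2) (Ioi T) :=
    (hz.mono_set (Ioi_subset_Ioi hT)).congr_fun
      (fun s hs => by linarith [harc s (hT.trans (le_of_lt hs))]) measurableSet_Ioi
  have h := tendsto_zero_of_hasDerivAt_of_integrableOn_Ioi hderiv (hrr'.const_mul 2).neg hz'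
  simpa using (tendsto_const_nhds (x := (1 : ℝ))).sub h

end RotationalHypersurface

theorem deriv_r_tendsto_one_general
    (r z : ℝ → ℝ)
    (hr : ContDiff ℝ 2 r)
    (hrpos : ∀ s > 0, 0 < r s)
    (harc : ∀ s ≥ 0, (deriv r s) ^ 2 + (deriv z s) ^ 2 = 1)
    (hjac : ∀ s > 0,
      deriv (deriv r) s + radialCurv r z s * angularCurv r z s * r s = 0)
    (hint1 : IntegrableOn (fun s => (angularCurv r z s) ^ 2 * (r s) ^ 2) (Set.Ici 0))
    (hint2 : IntegrableOn (fun s => |radialCurv r z s * angularCurv r z s| * (r s) ^ 2) (Set.Ici 0))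
    : Filter.Tendsto (deriv r) Filter.atTop (nhds 1) := by
  have hz := integrableOn_deriv_sq_of_integrableOn_angularCurv hrpos hint1
  have hw := hz.add <| (integrableOn_radialCurv_mul_angularCurv_mul_sq hr.continuous.measurable
    hint2).mono_set Ioi_subset_Ici_self
  obtain ⟨T, hT⟩ := eventually_atTop.mp <|
    (eventually_one_le_and_deriv_pos hr hrpos harc hjac hw).and (eventually_ge_atTop 0)
  have hT0 : 0 ≤ T := (hT T le_rfl).2
  have hrr' := integrableOn_deriv_mul_deriv_deriv hr harc hjac hint2 hT0
    fun s hs => (hT s hs.le).1.1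
  refine tendsto_one_of_sq_tendsto_one (tendsto_deriv_sq_one hr harc hz hT0 hrr') ?_
  filter_upwards [eventually_ge_atTop T] with t ht
  exact (hT t ht).1.2.le

theorem deriv_r_tendsto_one
    (r z : ℝ → ℝ)
    (hr : ContDiff ℝ 2 r) (hz : ContDiff ℝ 2 z)
    (hr0 : r 0 = 0) (hr0' : deriv r 0 = 1)
    (hrpos : ∀ s > 0, 0 < r s)
    (harc : ∀ s ≥ 0, (deriv r s) ^ 2 + (deriv z s) ^ 2 = 1)
    (hjac : ∀ s > 0,
      deriv (deriv r) s + radialCurv r z s * angularCurv r z s * r s = 0)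
    (hint1 : IntegrableOn (fun s => (angularCurv r z s) ^ 2 * (r s) ^ 2) (Set.Ici 0))
    (hint2 : IntegrableOn (fun s => |radialCurv r z s * angularCurv r z s| * (r s) ^ 2) (Set.Ici 0))
    : Filter.Tendsto (deriv r) Filter.atTop (nhds 1) :=
  deriv_r_tendsto_one_general r z hr hrpos harc hjac hint1 hint2
end

section
/- The integral ∫₁^∞ dt / r(t)² is finite. -/
open Real MeasureTheory

/-!
Differentiating `r r'` and using `r'² = 1 - z'² = 1 - k_θ² r²` and the Jacobi equation
`r r'' = -k_s k_θ r²` gives `(r r')' ≥ 1 - g` with `g = k_θ² r² + |k_s k_θ| r²` integrable.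
Integrating from `0`, and since `r' ≤ 1`, `r(s) ≥ r(s) r'(s) ≥ s - ∫₀^∞ g`. Hence `r` grows at
least linearly and `1 / r²` is dominated by a multiple of `t⁻²` at infinity.
-/

open Set Filter Asymptotics

theorem integrableOn_Ici_one_div_sq_of_sub_le {f : ℝ → ℝ} {a C : ℝ}
    (hf : ContinuousOn f (Ici a)) (hpos : ∀ t ≥ a, 0 < f t) (hlin : ∀ t ≥ a, t - C ≤ f t) :
    IntegrableOn (fun t => 1 / f t ^ 2) (Ici a) := by
  have hloc : LocallyIntegrableOn (fun t => 1 / f t ^ 2) (Ici a) :=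
    (continuousOn_const.div (hf.pow 2) fun t ht => (pow_pos (hpos t ht) 2).ne').locallyIntegrableOn
      measurableSet_Ici
  refine hloc.integrableOn_of_isBigO_atTop (g := fun t => t ^ (-2 : ℝ)) ?_
    (integrableAtFilter_rpow_atTop_iff.mpr (by norm_num))
  refine isBigO_iff.mpr ⟨4, ?_⟩
  filter_upwards [eventually_ge_atTop a, eventually_ge_atTop (2 * C), eventually_gt_atTop 0]
    with t hta htC ht0
  have hft : t / 2 ≤ f t := by linarith [hlin t hta]
  rw [norm_of_nonneg (by positivity), norm_of_nonneg (by positivity), rpow_neg ht0.le,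
    rpow_two, div_le_iff₀ (pow_pos (hpos t hta) 2)]
  calc (1 : ℝ) = 4 * (t ^ 2)⁻¹ * (t / 2) ^ 2 := by field_simp; ring
    _ ≤ 4 * (t ^ 2)⁻¹ * f t ^ 2 := by gcongr

theorem sub_intervalIntegral_le_mul_deriv {r g : ℝ → ℝ} (hr : ContDiff ℝ 2 r) (hr0 : r 0 = 0)
    {s : ℝ} (hs : 0 ≤ s) (hg : IntervalIntegrable g volume 0 s)
    (hbound : ∀ t ∈ Ioo 0 s, 1 - g t ≤ deriv r t ^ 2 + r t * deriv (deriv r) t) :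
    s - ∫ t in 0..s, g t ≤ r s * deriv r s := by
  have hr' : ContDiff ℝ 1 (deriv r) := hr.iterate_deriv' 1 1
  have hr'' : Continuous (deriv (deriv r)) := hr'.continuous_deriv le_rfl
  have hrr' : Continuous fun t => deriv r t * deriv r t + r t * deriv (deriv r) t :=
    (hr'.continuous.mul hr'.continuous).add (hr.continuous.mul hr'')
  calc s - ∫ t in 0..s, g t = ∫ t in 0..s, (1 - g t) := by
        rw [intervalIntegral.integral_sub intervalIntegrable_const hg]; simp
    _ ≤ ∫ t in 0..s, (deriv r t * deriv r t + r t * deriv (deriv r) t) :=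
        intervalIntegral.integral_mono_on_of_le_Ioo hs (intervalIntegrable_const.sub hg)
          (hrr'.intervalIntegrable 0 s)
          fun t ht => by simpa only [sq] using hbound t ht
    _ = r s * deriv r s := by
        rw [intervalIntegral.integral_deriv_mul_eq_sub
          (fun t _ => (hr.differentiable (by norm_num) t).hasDerivAt)
          (fun t _ => (hr'.differentiable one_ne_zero t).hasDerivAt)
          (hr'.continuous.intervalIntegrable _ _) (hr''.intervalIntegrable _ _), hr0]
        ring

theorem one_sub_curv_le_deriv_sq_add_mul_deriv_deriv {r z : ℝ → ℝ} {t : ℝ} (ht : r t ≠ 0)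
    (harc : deriv r t ^ 2 + deriv z t ^ 2 = 1)
    (hjac : deriv (deriv r) t + radialCurv r z t * angularCurv r z t * r t = 0) :
    1 - (angularCurv r z t ^ 2 * r t ^ 2 + |radialCurv r z t * angularCurv r z t| * r t ^ 2) ≤
      deriv r t ^ 2 + r t * deriv (deriv r) t := by
  have hz : angularCurv r z t ^ 2 * r t ^ 2 = deriv z t ^ 2 := by
    rw [angularCurv]; field_simp
  have hrr : r t * deriv (deriv r) t = -(radialCurv r z t * angularCurv r z t) * r t ^ 2 := by
    linear_combination r t * hjac
  rw [hz, hrr]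
  linarith [mul_le_mul_of_nonneg_right (le_abs_self (radialCurv r z t * angularCurv r z t))
    (sq_nonneg (r t))]

theorem nonparabolic_general
    (r z : ℝ → ℝ)
    (hr : ContDiff ℝ 2 r)
    (hr0 : r 0 = 0)
    (hrpos : ∀ s > 0, 0 < r s)
    (harc : ∀ s ≥ 0, (deriv r s) ^ 2 + (deriv z s) ^ 2 = 1)
    (hjac : ∀ s > 0,
      deriv (deriv r) s + radialCurv r z s * angularCurv r z s * r s = 0)
    (hint1 : IntegrableOn (fun s => (angularCurv r z s) ^ 2 * (r s) ^ 2) (Set.Ici 0))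
    (hint2 : IntegrableOn (fun s => |radialCurv r z s * angularCurv r z s| * (r s) ^ 2) (Set.Ici 0))
    : IntegrableOn (fun t => 1 / (r t) ^ 2) (Set.Ici 1) := by
  set g : ℝ → ℝ := fun s =>
    angularCurv r z s ^ 2 * r s ^ 2 + |radialCurv r z s * angularCurv r z s| * r s ^ 2
  have hg : IntegrableOn g (Ici 0) := hint1.add hint2
  have hlin : ∀ s ≥ 1, s - ∫ t in Ici 0, g t ≤ r s := by
    intro s hs
    have hs0 : 0 < s := by linarith
    have hmul : s - ∫ t in 0..s, g t ≤ r s * deriv r s :=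
      sub_intervalIntegral_le_mul_deriv hr hr0 hs0.le
        ((intervalIntegrable_iff_integrableOn_Icc_of_le hs0.le).mpr
          (hg.mono_set Icc_subset_Ici_self)) fun t ht =>
          one_sub_curv_le_deriv_sq_add_mul_deriv_deriv (hrpos t ht.1).ne'
            (harc t ht.1.le) (hjac t ht.1)
    have htail : ∫ t in 0..s, g t ≤ ∫ t in Ici 0, g t := by
      rw [intervalIntegral.integral_of_le hs0.le]
      exact setIntegral_mono_set hg (ae_of_all _ fun t => by positivity)
        (Ioc_subset_Icc_self.trans Icc_subset_Ici_self).eventuallyLE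
    have hderiv : deriv r s ≤ 1 := by nlinarith [harc s hs0.le, sq_nonneg (deriv z s)]
    linarith [mul_le_of_le_one_right (hrpos s hs0).le hderiv]
  exact integrableOn_Ici_one_div_sq_of_sub_le hr.continuous.continuousOn
    (fun t ht => hrpos t (by linarith)) hlin

theorem nonparabolic
    (r z : ℝ → ℝ)
    (hr : ContDiff ℝ 2 r) (hz : ContDiff ℝ 2 z)
    (hr0 : r 0 = 0) (hr0' : deriv r 0 = 1)
    (hrpos : ∀ s > 0, 0 < r s)
    (harc : ∀ s ≥ 0, (deriv r s) ^ 2 + (deriv z s) ^ 2 = 1)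
    (hjac : ∀ s > 0,
      deriv (deriv r) s + radialCurv r z s * angularCurv r z s * r s = 0)
    (hint1 : IntegrableOn (fun s => (angularCurv r z s) ^ 2 * (r s) ^ 2) (Set.Ici 0))
    (hint2 : IntegrableOn (fun s => |radialCurv r z s * angularCurv r z s| * (r s) ^ 2) (Set.Ici 0))
    : IntegrableOn (fun t => 1 / (r t) ^ 2) (Set.Ici 1) :=
  nonparabolic_general r z hr hr0 hrpos harc hjac hint1 hint2
end

section
/- The volume V(s) = 4π ∫₀ˢ r(v)² dv of the geodesic ball of radius s centered at the pole satisfies lim_{s→∞} V(s)/s³ = 4π/3. In particular, V(s) has exactly cubic growth and Σ has large volume growth with volume-growth constant α_Σ = lim_{s→∞} V(s)/(v₃(1)s³) = 1, where v₃(1) = 4π/3 is the volume of the unit ball in R³. -/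
open Real MeasureTheory

/-!
By the Jacobi equation and `r′² = 1 − z′² = 1 − k_θ² r²`, the derivative of `r r′` is
`(r r′)′ = r′² + r r″ = 1 − (k_θ² + k_s k_θ) r²`, so it differs from `1` by a function whose
integral over `[0, ∞)` is a finite constant `C`. Integrating three times gives
`|r r′ − s| ≤ C`, `|r² − s²| ≤ 2 C s` and `|V(s)/(4π) − s³/3| ≤ C s²`.
-/

open Set Filter Topology intervalIntegral

lemma abs_sub_le_integral_of_hasDerivAt {f f' b : ℝ → ℝ} {a c : ℝ} (hac : a ≤ c)
    (hf : ∀ x, HasDerivAt f (f' x) x) (hb : ∀ x ∈ Ioo a c, |f' x| ≤ b x)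
    (hbint : IntervalIntegrable b volume a c) :
    |f c - f a| ≤ ∫ x in a..c, b x := by
  have hdiff : Differentiable ℝ f := fun x => (hf x).differentiableAt
  refine norm_sub_le_integral_of_norm_deriv_le_of_le hac hdiff.continuous.continuousOn
    hdiff.differentiableOn (ae_of_all _ fun x hx => ?_) hbint
  rw [(hf x).deriv]
  exact hb x hx

lemma intervalIntegral_le_setIntegral_Ioi {H : ℝ → ℝ} {a s : ℝ} (has : a ≤ s)
    (hH : IntegrableOn H (Ioi a)) (hH0 : ∀ x > a, 0 ≤ H x) :
    ∫ x in a..s, H x ≤ ∫ x in Ioi a, H x := by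
  rw [integral_of_le has]
  exact setIntegral_mono_set hH (ae_restrict_of_forall_mem measurableSet_Ioi hH0)
    (Ioc_subset_Ioi_self.eventuallyLE)

lemma abs_deriv_sq_add_mul_deriv_deriv_sub_one_le {r z : ℝ → ℝ} {s : ℝ} (hrs : r s ≠ 0)
    (harc : deriv r s ^ 2 + deriv z s ^ 2 = 1)
    (hjac : deriv (deriv r) s + radialCurv r z s * angularCurv r z s * r s = 0) :
    |deriv r s ^ 2 + r s * deriv (deriv r) s - 1| ≤
      angularCurv r z s ^ 2 * r s ^ 2 + |radialCurv r z s * angularCurv r z s| * r s ^ 2 := by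
  have hang : angularCurv r z s ^ 2 * r s ^ 2 = deriv z s ^ 2 := by
    rw [angularCurv, div_pow, div_mul_cancel₀ _ (pow_ne_zero 2 hrs)]
  have hdefect : deriv r s ^ 2 + r s * deriv (deriv r) s - 1 =
      -(angularCurv r z s ^ 2 * r s ^ 2 + radialCurv r z s * angularCurv r z s * r s ^ 2) := by
    linear_combination harc + hang + r s * hjac
  calc |deriv r s ^ 2 + r s * deriv (deriv r) s - 1|
      ≤ |angularCurv r z s ^ 2 * r s ^ 2| + |radialCurv r z s * angularCurv r z s * r s ^ 2| := by
        rw [hdefect, abs_neg]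
        exact abs_add_le _ _
    _ = _ := by
        rw [abs_of_nonneg (by positivity), abs_mul _ (r s ^ 2), abs_of_nonneg (sq_nonneg (r s))]

section Integration

variable {r : ℝ → ℝ} {s : ℝ}

lemma abs_mul_deriv_sub_le (hr : ContDiff ℝ 2 r) (hr0 : r 0 = 0) {H : ℝ → ℝ}
    (hH : IntegrableOn H (Ioi 0))
    (hbound : ∀ x > 0, |deriv r x ^ 2 + r x * deriv (deriv r) x - 1| ≤ H x) (hs : 0 ≤ s) :
    |r s * deriv r s - s| ≤ ∫ x in Ioi 0, H x := by
  have hr' : ContDiff ℝ 1 (deriv r) := hr.iterate_deriv' 1 1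
  have hHs : IntervalIntegrable H volume 0 s :=
    (intervalIntegrable_iff_integrableOn_Ioc_of_le hs).mpr (hH.mono_set Ioc_subset_Ioi_self)
  calc |r s * deriv r s - s|
      = |(r s * deriv r s - s) - (r 0 * deriv r 0 - 0)| := by rw [hr0]; ring_nf
    _ ≤ ∫ x in (0 : ℝ)..s, H x := by
        refine abs_sub_le_integral_of_hasDerivAt (f := fun x => r x * deriv r x - x) hs
          (fun x => ?_) (fun x hx => hbound x hx.1) hHs
        have := ((hr.differentiable two_ne_zero x).hasDerivAt.mul
          (hr'.differentiable one_ne_zero x).hasDerivAt).sub (hasDerivAt_id x)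
        exact this.congr_deriv (by simp; ring)
    _ ≤ ∫ x in Ioi 0, H x :=
        intervalIntegral_le_setIntegral_Ioi hs hH fun x hx => (abs_nonneg _).trans (hbound x hx)

lemma abs_sq_sub_sq_le (hr : ContDiff ℝ 1 r) (hr0 : r 0 = 0) {C : ℝ}
    (h : ∀ x ≥ 0, |r x * deriv r x - x| ≤ C) (hs : 0 ≤ s) :
    |r s ^ 2 - s ^ 2| ≤ 2 * C * s := by
  calc |r s ^ 2 - s ^ 2|
      = |(r s ^ 2 - s ^ 2) - (r 0 ^ 2 - 0 ^ 2)| := by rw [hr0]; ring_nf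
    _ ≤ ∫ _ in (0 : ℝ)..s, 2 * C := by
        refine abs_sub_le_integral_of_hasDerivAt (f := fun x => r x ^ 2 - x ^ 2)
          (f' := fun x => 2 * (r x * deriv r x - x)) hs (fun x => ?_) (fun x hx => ?_)
          intervalIntegrable_const
        · have := ((hr.differentiable one_ne_zero x).hasDerivAt.pow 2).sub (hasDerivAt_pow 2 x)
          exact this.congr_deriv (by simp; ring)
        · rw [abs_mul, abs_two]
          linarith [h x hx.1.le]
    _ = 2 * C * s := by simp; ring

lemma abs_integral_sq_sub_le (hr : Continuous r) {C : ℝ}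
    (h : ∀ x ≥ 0, |r x ^ 2 - x ^ 2| ≤ 2 * C * x) (hs : 0 ≤ s) :
    |(∫ x in (0 : ℝ)..s, r x ^ 2) - s ^ 3 / 3| ≤ C * s ^ 2 := by
  calc |(∫ x in (0 : ℝ)..s, r x ^ 2) - s ^ 3 / 3|
      = |((∫ x in (0 : ℝ)..s, r x ^ 2) - s ^ 3 / 3)
          - ((∫ x in (0 : ℝ)..0, r x ^ 2) - 0 ^ 3 / 3)| := by simp
    _ ≤ ∫ x in (0 : ℝ)..s, 2 * C * x := by
        refine abs_sub_le_integral_of_hasDerivAt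
          (f := fun t => (∫ x in (0 : ℝ)..t, r x ^ 2) - t ^ 3 / 3)
          (f' := fun x => r x ^ 2 - x ^ 2) hs (fun x => ?_) (fun x hx => h x hx.1.le) ?_
        · have := ((hr.pow 2).integral_hasStrictDerivAt 0 x).hasDerivAt.sub
            ((hasDerivAt_pow 3 x).div_const 3)
          exact this.congr_deriv (by simp)
        · exact (continuous_const.mul continuous_id).intervalIntegrable 0 s
    _ = C * s ^ 2 := by rw [intervalIntegral.integral_const_mul, integral_id]; ring

end Integration

lemma tendsto_div_pow_of_abs_sub_le {f : ℝ → ℝ} {a C : ℝ} {n : ℕ}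
    (h : ∀ s ≥ 0, |f s - a * s ^ (n + 1)| ≤ C * s ^ n) :
    Tendsto (fun s => f s / s ^ (n + 1)) atTop (𝓝 a) := by
  rw [tendsto_iff_norm_sub_tendsto_zero]
  refine squeeze_zero' (Eventually.of_forall fun _ => norm_nonneg _) ?_
    ((tendsto_const_nhds (x := C)).div_atTop tendsto_id)
  filter_upwards [eventually_gt_atTop 0] with s hs
  have hsn : 0 < s ^ (n + 1) := by positivity
  rw [Real.norm_eq_abs, div_sub' hsn.ne', abs_div, abs_of_pos hsn, div_le_iff₀ hsn]
  calc |f s - s ^ (n + 1) * a| = |f s - a * s ^ (n + 1)| := by rw [mul_comm]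
    _ ≤ C * s ^ n := h s hs.le
    _ = C / id s * s ^ (n + 1) := by rw [id, pow_succ]; field_simp

theorem volume_cubic_growth_general
    (r z : ℝ → ℝ)
    (hr : ContDiff ℝ 2 r)
    (hr0 : r 0 = 0)
    (hrpos : ∀ s > 0, 0 < r s)
    (harc : ∀ s ≥ 0, (deriv r s) ^ 2 + (deriv z s) ^ 2 = 1)
    (hjac : ∀ s > 0,
      deriv (deriv r) s + radialCurv r z s * angularCurv r z s * r s = 0)
    (hint1 : IntegrableOn (fun s => (angularCurv r z s) ^ 2 * (r s) ^ 2) (Set.Ici 0))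
    (hint2 : IntegrableOn (fun s => |radialCurv r z s * angularCurv r z s| * (r s) ^ 2) (Set.Ici 0))
    : Filter.Tendsto
        (fun s => (4 * Real.pi * ∫ v in (0 : ℝ)..s, (r v) ^ 2) / s ^ 3)
        Filter.atTop (nhds (4 * Real.pi / 3)) ∧
      Filter.Tendsto
        (fun s => (4 * Real.pi * ∫ v in (0 : ℝ)..s, (r v) ^ 2) / (4 * Real.pi / 3 * s ^ 3))
        Filter.atTop (nhds 1) := by
  have hint := (hint1.add hint2).mono_set Ioi_subset_Ici_self
  set C := ∫ x in Ioi 0, (angularCurv r z x ^ 2 * r x ^ 2 +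
    |radialCurv r z x * angularCurv r z x| * r x ^ 2)
  have hmul : ∀ s ≥ 0, |r s * deriv r s - s| ≤ C := fun s hs =>
    abs_mul_deriv_sub_le hr hr0 hint (fun x hx => abs_deriv_sq_add_mul_deriv_deriv_sub_one_le
      (hrpos x hx).ne' (harc x hx.le) (hjac x hx)) hs
  have hsq : ∀ s ≥ 0, |r s ^ 2 - s ^ 2| ≤ 2 * C * s := fun s hs =>
    abs_sq_sub_sq_le (hr.of_le one_le_two) hr0 hmul hs
  have hV : Tendsto (fun s => (∫ v in (0 : ℝ)..s, r v ^ 2) / s ^ (2 + 1)) atTop (𝓝 (1 / 3)) :=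
    tendsto_div_pow_of_abs_sub_le fun s hs => by
      simpa only [one_div_mul_eq_div] using abs_integral_sq_sub_le hr.continuous hsq hs
  have hvol : Tendsto (fun s => (4 * π * ∫ v in (0 : ℝ)..s, r v ^ 2) / s ^ 3) atTop
      (𝓝 (4 * π / 3)) := by
    simpa only [mul_div_assoc, mul_one_div] using hV.const_mul (4 * π)
  refine ⟨hvol, ?_⟩
  have hnorm := hvol.div_const (4 * π / 3)
  rw [div_self (by positivity)] at hnorm
  simpa only [div_div, mul_comm] using hnorm

theorem volume_cubic_growth
    (r z : ℝ → ℝ)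
    (hr : ContDiff ℝ 2 r) (hz : ContDiff ℝ 2 z)
    (hr0 : r 0 = 0) (hr0' : deriv r 0 = 1)
    (hrpos : ∀ s > 0, 0 < r s)
    (harc : ∀ s ≥ 0, (deriv r s) ^ 2 + (deriv z s) ^ 2 = 1)
    (hjac : ∀ s > 0,
      deriv (deriv r) s + radialCurv r z s * angularCurv r z s * r s = 0)
    (hint1 : IntegrableOn (fun s => (angularCurv r z s) ^ 2 * (r s) ^ 2) (Set.Ici 0))
    (hint2 : IntegrableOn (fun s => |radialCurv r z s * angularCurv r z s| * (r s) ^ 2) (Set.Ici 0))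
    : Filter.Tendsto
        (fun s => (4 * Real.pi * ∫ v in (0 : ℝ)..s, (r v) ^ 2) / s ^ 3)
        Filter.atTop (nhds (4 * Real.pi / 3)) ∧
      Filter.Tendsto
        (fun s => (4 * Real.pi * ∫ v in (0 : ℝ)..s, (r v) ^ 2) / (4 * Real.pi / 3 * s ^ 3))
        Filter.atTop (nhds 1) :=
  volume_cubic_growth_general r z hr hr0 hrpos harc hjac hint1 hint2
end
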